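/- Let ω = ω_R + i·ε with ω_R ∈ ℝ and ε > 0, let μ ∈ ℝ, and let λ ∈ ℂ satisfy Im((λ + a²·ω²)·conj(ω)) < 0. Suppose R is a nontrivial C² solution of the radial ODE on (r₊, ∞) such that near r₊ one has R(r) = (r − r₊)^{ξ}·ρ(r) with ρ extending to a C¹ function on [r₊, r₊ + 1), where ξ := i·(a·m − 2·M·r₊·ω)/(r₊ − r₋), and such that R decays exponentially at infinity. Then ω_R² + ε² < (a·m/(2·M·r₊))². -/

import Mathlib

open Real Set MeasureTheory Filter Topology ComplexConjugate

/-- The larger root `r₊ = M + √(M² − a²)`. -/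
noncomputable def rPlus (M a : ℝ) : ℝ := M + Real.sqrt (M ^ 2 - a ^ 2)

/-- The smaller root `r₋ = M − √(M² − a²)`. -/
noncomputable def rMinus (M a : ℝ) : ℝ := M - Real.sqrt (M ^ 2 - a ^ 2)

/-- `Δ(r) = (r − r₊)(r − r₋)`. -/
noncomputable def Delta (M a r : ℝ) : ℝ := (r - rPlus M a) * (r - rMinus M a)

/-- The radial potential with complex `ω, λ` and real `μ`. -/
noncomputable def VpotC (M a : ℝ) (m : ℤ) (ω lam : ℂ) (μ : ℝ) (r : ℝ) : ℂ :=
  -(((r ^ 2 + a ^ 2) ^ 2 : ℝ) : ℂ) * ω ^ 2 + ((4 * M * a * m * r : ℝ) : ℂ) * ω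
    - ((a ^ 2 * m ^ 2 : ℝ) : ℂ)
    + (Delta M a r : ℂ) * (lam + ((a ^ 2 : ℝ) : ℂ) * ω ^ 2 + ((μ ^ 2 * r ^ 2 : ℝ) : ℂ))

/-- The radial ODE `Δ (Δ R')' − V R = 0` on `(r₊, ∞)` with complex parameters. -/
def RadialODEC (M a : ℝ) (m : ℤ) (ω lam : ℂ) (μ : ℝ) (R : ℝ → ℂ) : Prop :=
  ∀ r ∈ Ioi (rPlus M a),
    (Delta M a r : ℂ) * deriv (fun s => (Delta M a s : ℂ) * deriv R s) r
      - VpotC M a m ω lam μ r * R r = 0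

/-- The exponent `ξ = i (a m − 2 M r₊ ω)/(r₊ − r₋)`. -/
noncomputable def xiExp (M a : ℝ) (m : ℤ) (ω : ℂ) : ℂ :=
  Complex.I * (((a * m : ℝ) : ℂ) - ((2 * M * rPlus M a : ℝ) : ℂ) * ω)
    / ((rPlus M a - rMinus M a : ℝ) : ℂ)

/-- Exponential decay at infinity of `h` together with its derivative. -/
def ExpDecay (rp : ℝ) (h : ℝ → ℂ) : Prop :=
  ∃ C c : ℝ, 0 < C ∧ 0 < c ∧ ∀ r : ℝ, rp + 1 ≤ r →
    ‖h r‖ + ‖deriv h r‖ ≤ C * Real.exp (-c * r)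

/-! For an unstable mode consider the current `W(r) = Im(ω̄ Δ R' R̄)`. By the radial equation
`W' = Im(ω̄ V) |R|² / Δ − ε Δ |R'|²`. If the mode were not superradiant, then
`a² m² ≤ (2 M r₊)² |ω|² ≤ (r² + a²)² |ω|²` on `(r₊, ∞)`, and the explicit form of `V` gives
`W' ≤ Im((λ + a² ω²) ω̄) |R|² ≤ 0`, with strict inequality wherever `R ≠ 0`. Since
`Re ξ = 2 M r₊ ε / (r₊ − r₋) > 0`, the horizon behaviour forces `W → 0` at `r₊`, and the
exponential decay forces `W → 0` at infinity; an antitone function with equal limits at both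
ends is constant, contradicting `W' < 0` at a point where `R ≠ 0`. -/

section Roots

variable {M a : ℝ}

lemma sqrt_sq_sub_sq_pos (ha : |a| < M) : 0 < √(M ^ 2 - a ^ 2) :=
  Real.sqrt_pos.2 (sub_pos.2 (sq_lt_sq' (abs_lt.1 ha).1 (abs_lt.1 ha).2))

lemma sqrt_sq_sub_sq_le (ha : |a| < M) : √(M ^ 2 - a ^ 2) ≤ M :=
  Real.sqrt_le_iff.2 ⟨(abs_nonneg a).trans ha.le, by nlinarith⟩

lemma rMinus_nonneg (ha : |a| < M) : 0 ≤ rMinus M a :=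
  sub_nonneg.2 (sqrt_sq_sub_sq_le ha)

lemma rMinus_lt_rPlus (ha : |a| < M) : rMinus M a < rPlus M a := by
  unfold rMinus rPlus; linarith [sqrt_sq_sub_sq_pos ha]

lemma rPlus_pos (ha : |a| < M) : 0 < rPlus M a :=
  (rMinus_nonneg ha).trans_lt (rMinus_lt_rPlus ha)

lemma rPlus_sq_add_sq (ha : a ^ 2 ≤ M ^ 2) : rPlus M a ^ 2 + a ^ 2 = 2 * M * rPlus M a := by
  unfold rPlus; nlinarith [Real.sq_sqrt (sub_nonneg.2 ha)]

lemma Delta_pos (ha : |a| < M) {r : ℝ} (hr : rPlus M a < r) : 0 < Delta M a r :=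
  mul_pos (sub_pos.2 hr) (sub_pos.2 ((rMinus_lt_rPlus ha).trans hr))

lemma Delta_le_sq (ha : |a| < M) {r : ℝ} (hr : rPlus M a ≤ r) : Delta M a r ≤ r ^ 2 := by
  unfold Delta; nlinarith [rMinus_nonneg ha, rMinus_lt_rPlus ha]

end Roots

lemma abs_im_mul_mul_conj_le (c z w : ℂ) (D : ℝ) :
    |(c * ((D : ℂ) * z) * conj w).im| ≤ ‖c‖ * (|D| * (‖z‖ * ‖w‖)) :=
  (Complex.abs_im_le_norm _).trans_eq <| by
    simp only [norm_mul, RCLike.norm_conj, Complex.norm_real, Real.norm_eq_abs]; ring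

lemma hasDerivAt_im_mul_flux_mul_conj {D : ℝ → ℝ} {R : ℝ → ℂ} {F' V : ℂ} (c : ℂ) {r : ℝ}
    (hR : DifferentiableAt ℝ R r)
    (hF : HasDerivAt (fun s => (D s : ℂ) * deriv R s) F' r)
    (hD : D r ≠ 0) (hode : D r * F' = V * R r) :
    HasDerivAt (fun s => (c * ((D s : ℂ) * deriv R s) * conj (R s)).im)
      ((c * V).im * (Complex.normSq (R r) / D r)
        + c.im * (D r * Complex.normSq (deriv R r))) r := by
  have hF' : F' = V * R r / D r := by
    rw [eq_div_iff (Complex.ofReal_ne_zero.2 hD)]; linear_combination hode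
  have key : c * F' * conj (R r) + c * ((D r : ℂ) * deriv R r) * conj (deriv R r)
      = c * V * ((Complex.normSq (R r) / D r : ℝ) : ℂ)
        + c * ((D r * Complex.normSq (deriv R r) : ℝ) : ℂ) := by
    rw [hF']
    push_cast
    rw [← Complex.mul_conj, ← Complex.mul_conj]
    field_simp
  refine (Complex.imCLM.hasFDerivAt.comp_hasDerivAt r
    ((hF.const_mul c).mul hR.hasDerivAt.star)).congr_deriv ?_
  change (c * F' * conj (R r) + c * ((D r : ℂ) * deriv R r) * conj (deriv R r)).im = _
  rw [key, Complex.add_im, Complex.im_mul_ofReal, Complex.im_mul_ofReal]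

lemma im_conj_mul_VpotC (M a : ℝ) (m : ℤ) (ω lam : ℂ) (μ r : ℝ) :
    (conj ω * VpotC M a m ω lam μ r).im =
      ω.im * (a ^ 2 * m ^ 2 - (r ^ 2 + a ^ 2) ^ 2 * Complex.normSq ω)
        + Delta M a r
          * (((lam + ((a ^ 2 : ℝ) : ℂ) * ω ^ 2) * conj ω).im - ω.im * (μ ^ 2 * r ^ 2)) := by
  have hω : conj ω * ω = (Complex.normSq ω : ℂ) := by rw [mul_comm, Complex.mul_conj]
  have hexp : conj ω * VpotC M a m ω lam μ r
      = ((-((r ^ 2 + a ^ 2) ^ 2 * Complex.normSq ω) : ℝ) : ℂ) * ω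
        + ((4 * M * a * m * r * Complex.normSq ω : ℝ) : ℂ)
        + ((-(a ^ 2 * m ^ 2) : ℝ) : ℂ) * conj ω
        + (Delta M a r : ℂ) * ((lam + ((a ^ 2 : ℝ) : ℂ) * ω ^ 2) * conj ω)
        + ((Delta M a r * (μ ^ 2 * r ^ 2) : ℝ) : ℂ) * conj ω := by
    unfold VpotC
    push_cast
    linear_combination (-(r ^ 2 + a ^ 2) ^ 2 * ω + 4 * M * a * m * r) * hω
  rw [hexp]
  simp only [Complex.add_im, Complex.im_ofReal_mul, Complex.ofReal_im, Complex.conj_im]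
  ring

lemma im_conj_mul_VpotC_le {M a : ℝ} (ha : |a| < M) (m : ℤ) {ω : ℂ} (lam : ℂ) (μ : ℝ) {r : ℝ}
    (hω : 0 ≤ ω.im) (hsr : a ^ 2 * m ^ 2 ≤ (2 * M * rPlus M a) ^ 2 * Complex.normSq ω)
    (hr : rPlus M a < r) :
    (conj ω * VpotC M a m ω lam μ r).im
      ≤ Delta M a r * ((lam + ((a ^ 2 : ℝ) : ℂ) * ω ^ 2) * conj ω).im := by
  have hΔ := Delta_pos ha hr
  have hM : 0 < M := (abs_nonneg a).trans_lt ha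
  have hrp := rPlus_pos ha
  have h2Mrp : 2 * M * rPlus M a ≤ r ^ 2 + a ^ 2 := by
    rw [← rPlus_sq_add_sq (sq_lt_sq' (abs_lt.1 ha).1 (abs_lt.1 ha).2).le]; nlinarith
  have hsr' : a ^ 2 * m ^ 2 ≤ (r ^ 2 + a ^ 2) ^ 2 * Complex.normSq ω :=
    hsr.trans (mul_le_mul_of_nonneg_right (pow_le_pow_left₀ (by positivity) h2Mrp 2)
      (Complex.normSq_nonneg ω))
  rw [im_conj_mul_VpotC]
  nlinarith [mul_nonneg hω (sub_nonneg.2 hsr'),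
    mul_nonneg hΔ.le (mul_nonneg hω (by positivity : 0 ≤ μ ^ 2 * r ^ 2))]

noncomputable def radialCurrent (M a : ℝ) (ω : ℂ) (R : ℝ → ℂ) (r : ℝ) : ℝ :=
  (conj ω * ((Delta M a r : ℂ) * deriv R r) * conj (R r)).im

lemma hasDerivAt_radialCurrent_le {M a : ℝ} (ha : |a| < M) {m : ℤ} {ω lam : ℂ} {μ : ℝ}
    {R : ℝ → ℂ}
    (hR : ContDiffOn ℝ 2 R (Ioi (rPlus M a))) (hODE : RadialODEC M a m ω lam μ R)
    (hω : 0 ≤ ω.im) (hsr : a ^ 2 * m ^ 2 ≤ (2 * M * rPlus M a) ^ 2 * Complex.normSq ω)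
    {r : ℝ} (hr : r ∈ Ioi (rPlus M a)) :
    ∃ E ≤ ((lam + ((a ^ 2 : ℝ) : ℂ) * ω ^ 2) * conj ω).im * Complex.normSq (R r),
      HasDerivAt (radialCurrent M a ω R) E r := by
  have hΔ := Delta_pos ha hr
  have hRr : ContDiffAt ℝ 2 R r := hR.contDiffAt (isOpen_Ioi.mem_nhds hr)
  have hR' : DifferentiableAt ℝ (deriv R) r :=
    ((hR.deriv_of_isOpen isOpen_Ioi (m := 1) (by norm_num)).differentiableOn
      one_ne_zero).differentiableAt (isOpen_Ioi.mem_nhds hr)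
  have hΔd : DifferentiableAt ℝ (fun s => (Delta M a s : ℂ)) r := by
    unfold Delta; fun_prop
  have hF : DifferentiableAt ℝ (fun s => (Delta M a s : ℂ) * deriv R s) r := hΔd.mul hR'
  refine ⟨_, ?_, hasDerivAt_im_mul_flux_mul_conj (V := VpotC M a m ω lam μ r) (conj ω)
    (hRr.differentiableAt (by norm_num)) hF.hasDerivAt hΔ.ne'
    (by linear_combination hODE r hr)⟩
  have hV : (conj ω * VpotC M a m ω lam μ r).im * (Complex.normSq (R r) / Delta M a r)
      ≤ ((lam + ((a ^ 2 : ℝ) : ℂ) * ω ^ 2) * conj ω).im * Complex.normSq (R r) := by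
    calc _ ≤ Delta M a r * ((lam + ((a ^ 2 : ℝ) : ℂ) * ω ^ 2) * conj ω).im
            * (Complex.normSq (R r) / Delta M a r) :=
          mul_le_mul_of_nonneg_right (im_conj_mul_VpotC_le ha m lam μ hω hsr hr)
            (div_nonneg (Complex.normSq_nonneg _) hΔ.le)
      _ = _ := by field_simp
  rw [Complex.conj_im]
  nlinarith [mul_nonneg hω (mul_nonneg hΔ.le (Complex.normSq_nonneg (deriv R r)))]

lemma ExpDecay.tendsto_sq_mul_norm_deriv_mul_norm {rp : ℝ} {h : ℝ → ℂ} (hh : ExpDecay rp h) :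
    Tendsto (fun r => r ^ 2 * (‖deriv h r‖ * ‖h r‖)) atTop (𝓝 0) := by
  obtain ⟨C, c, -, hc, hbound⟩ := hh
  have hlim : Tendsto (fun r => C ^ 2 / (2 * c) ^ 2 * ((2 * c * r) ^ 2 * exp (-(2 * c * r))))
      atTop (𝓝 0) := by
    simpa using ((tendsto_pow_mul_exp_neg_atTop_nhds_zero 2).comp
      (tendsto_id.const_mul_atTop (by positivity : 0 < 2 * c))).const_mul (C ^ 2 / (2 * c) ^ 2)
  refine squeeze_zero' (Eventually.of_forall fun r => by positivity) ?_ hlim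
  filter_upwards [eventually_ge_atTop (rp + 1)] with r hr
  have hderiv : ‖deriv h r‖ ≤ C * exp (-c * r) := by linarith [hbound r hr, norm_nonneg (h r)]
  have hval : ‖h r‖ ≤ C * exp (-c * r) := by linarith [hbound r hr, norm_nonneg (deriv h r)]
  calc r ^ 2 * (‖deriv h r‖ * ‖h r‖) ≤ r ^ 2 * (C * exp (-c * r) * (C * exp (-c * r))) := by
        gcongr
        exact (norm_nonneg _).trans hval
    _ = _ := by
        rw [show -(2 * c * r) = -c * r + -c * r by ring, exp_add]
        field_simp

lemma tendsto_radialCurrent_atTop {M a : ℝ} (ha : |a| < M) (ω : ℂ) {R : ℝ → ℂ}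
    (hR : ExpDecay (rPlus M a) R) : Tendsto (radialCurrent M a ω R) atTop (𝓝 0) := by
  refine squeeze_zero_norm' ?_
    (by simpa using hR.tendsto_sq_mul_norm_deriv_mul_norm.const_mul ‖ω‖)
  filter_upwards [eventually_gt_atTop (rPlus M a)] with r hr
  refine (abs_im_mul_mul_conj_le _ _ _ _).trans ?_
  rw [RCLike.norm_conj, abs_of_pos (Delta_pos ha hr)]
  gcongr
  exact Delta_le_sq ha hr.le

lemma nhdsGT_le_nhdsWithin_Ico {a b : ℝ} (hab : a < b) : 𝓝[>] a ≤ 𝓝[Ico a b] a :=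
  (nhdsWithin_Ioo_eq_nhdsGT hab).symm.le.trans (nhdsWithin_mono _ Ioo_subset_Ico_self)

lemma ContDiffOn.tendsto_deriv_nhdsGT {E : Type*} [NormedAddCommGroup E] [NormedSpace ℝ E]
    {f : ℝ → E} {a b : ℝ} (hab : a < b) (hf : ContDiffOn ℝ 1 f (Ico a b)) :
    Tendsto (deriv f) (𝓝[>] a) (𝓝 (derivWithin f (Ico a b) a)) := by
  refine (((hf.continuousOn_derivWithin (uniqueDiffOn_Ico a b) le_rfl) a
    (left_mem_Ico.2 hab)).tendsto.mono_left (nhdsGT_le_nhdsWithin_Ico hab)).congr' ?_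
  filter_upwards [Ioo_mem_nhdsGT hab] with s hs
  exact derivWithin_of_mem_nhds (Ico_mem_nhds hs.1 hs.2)

lemma sub_mul_deriv_cpow_mul {ρ : ℝ → ℂ} {rp s : ℝ} (hs : rp < s) (ξ : ℂ)
    (hρ : DifferentiableAt ℝ ρ s) :
    ((s - rp : ℝ) : ℂ) * deriv (fun t : ℝ => ((t - rp : ℝ) : ℂ) ^ ξ * ρ t) s
      = (ξ * ρ s + ((s - rp : ℝ) : ℂ) * deriv ρ s) * ((s - rp : ℝ) : ℂ) ^ ξ := by
  have hx : ((s - rp : ℝ) : ℂ) ≠ 0 := Complex.ofReal_ne_zero.2 (sub_pos.2 hs).ne'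
  have hpow : HasDerivAt (fun t : ℝ => ((t - rp : ℝ) : ℂ) ^ ξ)
      (ξ * ((s - rp : ℝ) : ℂ) ^ (ξ - 1)) s :=
    ((Complex.hasStrictDerivAt_cpow_const
      (Complex.ofReal_mem_slitPlane.2 (sub_pos.2 hs))).hasDerivAt.comp_ofReal).comp_sub_const s rp
  have hderiv : deriv (fun t : ℝ => ((t - rp : ℝ) : ℂ) ^ ξ * ρ t) s
      = ξ * ((s - rp : ℝ) : ℂ) ^ (ξ - 1) * ρ s + ((s - rp : ℝ) : ℂ) ^ ξ * deriv ρ s :=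
    (hpow.mul hρ.hasDerivAt).deriv
  rw [hderiv, Complex.cpow_sub _ _ hx, Complex.cpow_one]
  field_simp

lemma tendsto_sub_mul_norm_deriv_mul_norm_nhdsGT {rp b : ℝ} (hb : rp < b) {ξ : ℂ}
    (hξ : 0 < ξ.re) {R ρ : ℝ → ℂ} (hρ : ContDiffOn ℝ 1 ρ (Ico rp b))
    (hR : ∀ s ∈ Ioo rp b, R s = ((s - rp : ℝ) : ℂ) ^ ξ * ρ s) :
    Tendsto (fun s => (s - rp) * (‖deriv R s‖ * ‖R s‖)) (𝓝[>] rp) (𝓝 0) := by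
  have hid : ∀ s ∈ Ioo rp b, ‖ξ * ρ s + ((s - rp : ℝ) : ℂ) * deriv ρ s‖ * ‖ρ s‖
      * (s - rp) ^ (2 * ξ.re) = (s - rp) * (‖deriv R s‖ * ‖R s‖) := by
    intro s hs
    have hx : 0 < s - rp := sub_pos.2 hs.1
    have hderiv : deriv R s = deriv (fun t : ℝ => ((t - rp : ℝ) : ℂ) ^ ξ * ρ t) s :=
      Filter.EventuallyEq.deriv_eq (eventually_of_mem (isOpen_Ioo.mem_nhds hs) hR)
    have key := congrArg norm (sub_mul_deriv_cpow_mul hs.1 ξ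
      ((hρ.contDiffAt (Ico_mem_nhds hs.1 hs.2)).differentiableAt one_ne_zero))
    rw [← hderiv, norm_mul, norm_mul, Complex.norm_real, Real.norm_eq_abs, abs_of_pos hx,
      Complex.norm_cpow_eq_rpow_re_of_pos hx] at key
    rw [hR s hs, norm_mul, Complex.norm_cpow_eq_rpow_re_of_pos hx, two_mul, Real.rpow_add hx,
      show (s - rp) * (‖deriv R s‖ * ((s - rp) ^ ξ.re * ‖ρ s‖))
        = (s - rp) * ‖deriv R s‖ * ((s - rp) ^ ξ.re * ‖ρ s‖) by ring, key]
    ring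
  have hρlim : Tendsto ρ (𝓝[>] rp) (𝓝 (ρ rp)) :=
    (hρ.continuousOn rp (left_mem_Ico.2 hb)).tendsto.mono_left (nhdsGT_le_nhdsWithin_Ico hb)
  have hsub : Tendsto (fun s : ℝ => s - rp) (𝓝[>] rp) (𝓝 0) := by
    simpa using ((continuous_sub_right rp).tendsto rp).mono_left nhdsWithin_le_nhds
  have hpow : Tendsto (fun s : ℝ => (s - rp) ^ (2 * ξ.re)) (𝓝[>] rp) (𝓝 0) := by
    have h := ((continuous_sub_right rp).continuousAt (x := rp)).rpow_const
      (Or.inr (mul_pos two_pos hξ).le)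
    simpa [Real.zero_rpow (mul_pos two_pos hξ).ne'] using h.tendsto.mono_left nhdsWithin_le_nhds
  have hlim : Tendsto (fun s => ‖ξ * ρ s + ((s - rp : ℝ) : ℂ) * deriv ρ s‖ * ‖ρ s‖
      * (s - rp) ^ (2 * ξ.re)) (𝓝[>] rp)
      (𝓝 (‖ξ * ρ rp + ((0 : ℝ) : ℂ) * derivWithin ρ (Ico rp b) rp‖ * ‖ρ rp‖ * 0)) :=
    (((tendsto_const_nhds.mul hρlim).add (((Complex.continuous_ofReal.tendsto 0).comp hsub).mul
      (hρ.tendsto_deriv_nhdsGT hb))).norm.mul hρlim.norm).mul hpow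
  rw [mul_zero] at hlim
  exact hlim.congr' (eventually_of_mem (Ioo_mem_nhdsGT hb) hid)

lemma tendsto_radialCurrent_nhdsGT {M a : ℝ} (ha : |a| < M) (ω : ℂ) {ξ : ℂ} (hξ : 0 < ξ.re)
    {R ρ : ℝ → ℂ} (hρ : ContDiffOn ℝ 1 ρ (Ico (rPlus M a) (rPlus M a + 1)))
    (hR : ∀ s ∈ Ioo (rPlus M a) (rPlus M a + 1), R s = ((s - rPlus M a : ℝ) : ℂ) ^ ξ * ρ s) :
    Tendsto (radialCurrent M a ω R) (𝓝[>] rPlus M a) (𝓝 0) := by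
  have hflux := tendsto_sub_mul_norm_deriv_mul_norm_nhdsGT (lt_add_one _) hξ hρ hR
  have hfactor : Tendsto (fun s => s - rMinus M a) (𝓝[>] rPlus M a)
      (𝓝 (rPlus M a - rMinus M a)) :=
    ((continuous_sub_right _).tendsto _).mono_left nhdsWithin_le_nhds
  refine squeeze_zero_norm' ?_ (by simpa using (hfactor.mul hflux).const_mul ‖ω‖)
  filter_upwards [self_mem_nhdsWithin] with s (hs : rPlus M a < s)
  refine (abs_im_mul_mul_conj_le _ _ _ _).trans_eq ?_
  rw [RCLike.norm_conj, abs_of_pos (Delta_pos ha hs), Delta]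
  ring

lemma xiExp_re_pos {M a : ℝ} (ha : |a| < M) (m : ℤ) {ω : ℂ} (hω : 0 < ω.im) :
    0 < (xiExp M a m ω).re := by
  have hM : 0 < M := (abs_nonneg a).trans_lt ha
  have hrp := rPlus_pos ha
  have hnum : (Complex.I * (((a * m : ℝ) : ℂ) - ((2 * M * rPlus M a : ℝ) : ℂ) * ω)).re
      = 2 * M * rPlus M a * ω.im := by
    simp [Complex.mul_re]
  rw [xiExp, Complex.div_ofReal_re, hnum]
  exact div_pos (by positivity) (sub_pos.2 (rMinus_lt_rPlus ha))

lemma antitoneOn_Ioi_of_hasDerivAt_nonpos {f : ℝ → ℝ} {a : ℝ}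
    (hf : ∀ x ∈ Ioi a, ∃ f' ≤ 0, HasDerivAt f f' x) : AntitoneOn f (Ioi a) := by
  choose! f' hf'0 hf' using hf
  refine antitoneOn_of_hasDerivWithinAt_nonpos (f' := f') (convex_Ioi a)
    (fun x hx => (hf' x hx).continuousAt.continuousWithinAt) ?_ ?_ <;> rw [interior_Ioi]
  · exact fun x hx => (hf' x hx).hasDerivWithinAt
  · exact hf'0

lemma AntitoneOn.eqOn_of_tendsto {f : ℝ → ℝ} {a c : ℝ} (hf : AntitoneOn f (Ioi a))
    (ha : Tendsto f (𝓝[>] a) (𝓝 c)) (htop : Tendsto f atTop (𝓝 c)) :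
    EqOn f (fun _ => c) (Ioi a) := by
  intro s hs
  apply le_antisymm
  · refine ge_of_tendsto ha ?_
    filter_upwards [Ioo_mem_nhdsGT hs] with t ht
    exact hf ht.1 hs ht.2.le
  · refine le_of_tendsto htop ?_
    filter_upwards [eventually_ge_atTop s] with t ht
    exact hf hs (lt_of_lt_of_le hs ht) ht

theorem stmt11_general (M a : ℝ) (ha : |a| < M) (m : ℤ)
    (ωR ε μ : ℝ) (hε : 0 < ε) (lam : ℂ)
    (hlam : ((lam + ((a ^ 2 : ℝ) : ℂ) * (((ωR : ℂ) + Complex.I * ε) ^ 2))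
      * conj ((ωR : ℂ) + Complex.I * ε)).im < 0)
    (R ρ : ℝ → ℂ)
    (hC2 : ContDiffOn ℝ 2 R (Ioi (rPlus M a)))
    (hnt : ∃ r ∈ Ioi (rPlus M a), R r ≠ 0)
    (hODE : RadialODEC M a m ((ωR : ℂ) + Complex.I * ε) lam μ R)
    (hρ : ContDiffOn ℝ 1 ρ (Ico (rPlus M a) (rPlus M a + 1)))
    (hhor : ∀ r ∈ Ioo (rPlus M a) (rPlus M a + 1),
      R r = (((r - rPlus M a : ℝ) : ℂ)) ^ (xiExp M a m ((ωR : ℂ) + Complex.I * ε)) * ρ r)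
    (hdecay : ExpDecay (rPlus M a) R) :
    ωR ^ 2 + ε ^ 2 < (a * m / (2 * M * rPlus M a)) ^ 2 := by
  set ω : ℂ := (ωR : ℂ) + Complex.I * ε
  have hωim : ω.im = ε := by simp [ω]
  by_contra hcon
  have hnorm : Complex.normSq ω = ωR ^ 2 + ε ^ 2 := by simp [ω, Complex.normSq_apply]; ring
  have hsr : a ^ 2 * m ^ 2 ≤ (2 * M * rPlus M a) ^ 2 * Complex.normSq ω := by
    have h2Mrp : 0 < 2 * M * rPlus M a := mul_pos (by linarith [abs_nonneg a]) (rPlus_pos ha)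
    rw [not_lt, div_pow, div_le_iff₀ (by positivity)] at hcon
    rw [hnorm]
    linarith
  have hderiv (r : ℝ) (hr : r ∈ Ioi (rPlus M a)) := hasDerivAt_radialCurrent_le ha hC2 hODE
    (hωim ▸ hε.le) hsr hr
  have hzero : EqOn (radialCurrent M a ω R) (fun _ => 0) (Ioi (rPlus M a)) := by
    refine AntitoneOn.eqOn_of_tendsto ?_
      (tendsto_radialCurrent_nhdsGT ha ω (xiExp_re_pos ha m (hωim ▸ hε)) hρ hhor)
      (tendsto_radialCurrent_atTop ha ω hdecay)
    refine antitoneOn_Ioi_of_hasDerivAt_nonpos fun r hr => ?_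
    obtain ⟨E, hE, hE'⟩ := hderiv r hr
    exact ⟨E, hE.trans (mul_nonpos_of_nonpos_of_nonneg hlam.le (Complex.normSq_nonneg _)), hE'⟩
  obtain ⟨r₀, hr₀, hR₀⟩ := hnt
  obtain ⟨E, hE, hE'⟩ := hderiv r₀ hr₀
  have hE0 : E = 0 := hE'.unique ((hasDerivAt_const r₀ (0 : ℝ)).congr_of_eventuallyEq
    (eventually_of_mem (isOpen_Ioi.mem_nhds hr₀) hzero))
  nlinarith [Complex.normSq_pos.2 hR₀]

/-- an unstable mode (`Im ω = ε > 0`) with the horizon boundary condition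
and exponential decay at infinity must be superradiant:
`ω_R² + ε² < (a m/(2 M r₊))²`. -/
theorem stmt11 (M a : ℝ) (hM : 0 < M) (ha : |a| < M) (m : ℤ)
    (ωR ε μ : ℝ) (hε : 0 < ε) (lam : ℂ)
    (hlam : ((lam + ((a ^ 2 : ℝ) : ℂ) * (((ωR : ℂ) + Complex.I * ε) ^ 2))
      * conj ((ωR : ℂ) + Complex.I * ε)).im < 0)
    (R ρ : ℝ → ℂ)
    (hC2 : ContDiffOn ℝ 2 R (Ioi (rPlus M a)))
    (hnt : ∃ r ∈ Ioi (rPlus M a), R r ≠ 0)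
    (hODE : RadialODEC M a m ((ωR : ℂ) + Complex.I * ε) lam μ R)
    (hρ : ContDiffOn ℝ 1 ρ (Ico (rPlus M a) (rPlus M a + 1)))
    (hhor : ∀ r ∈ Ioo (rPlus M a) (rPlus M a + 1),
      R r = (((r - rPlus M a : ℝ) : ℂ)) ^ (xiExp M a m ((ωR : ℂ) + Complex.I * ε)) * ρ r)
    (hdecay : ExpDecay (rPlus M a) R) :
    ωR ^ 2 + ε ^ 2 < (a * m / (2 * M * rPlus M a)) ^ 2 :=
  stmt11_general M a ha m ωR ε μ hε lam hlam R ρ hC2 hnt hODE hρ hhor hdecay
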